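/- Final states of the Searching Abstract Machine decode to weak head normal forms: if no transition applies to state s, then ⌊s⌋ has no →wh redex. -/
import Mathlib


/-- Lambda terms with named variables. -/
inductive Term : Type
  | var : ℕ → Term
  | lam : ℕ → Term → Term
  | app : Term → Term → Term
deriving DecidableEq

namespace Term

/-- Size: the number of constructors. -/
def size : Term → ℕ
  | var _ => 1
  | lam _ t => t.size + 1
  | app t s => t.size + s.size + 1

/-- Substitution (stopping at matching binders). -/
def subst (x : ℕ) (u : Term) : Term → Term
  | var y => if y = x then u else var y
  | lam y t => if y = x then lam y t else lam y (subst x u t)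
  | app t s => app (subst x u t) (subst x u s)

end Term

/-- Beta reduction: compatible closure of the root beta rule. -/
inductive Beta : Term → Term → Prop
  | beta (x : ℕ) (t u : Term) : Beta (.app (.lam x t) u) (Term.subst x u t)
  | appL {t t' : Term} (u : Term) : Beta t t' → Beta (.app t u) (.app t' u)
  | appR {u u' : Term} (t : Term) : Beta u u' → Beta (.app t u) (.app t u')
  | lam {t t' : Term} (x : ℕ) : Beta t t' → Beta (.lam x t) (.lam x t')

/-- Weak head reduction. -/
inductive Wh : Term → Term → Prop
  | beta (x : ℕ) (t u : Term) : Wh (.app (.lam x t) u) (Term.subst x u t)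
  | appL {t t' : Term} (u : Term) : Wh t t' → Wh (.app t u) (.app t' u)

/-- `StepN R n a b`: `a` reduces to `b` in exactly `n` `R`-steps. -/
inductive StepN {α : Type} (R : α → α → Prop) : ℕ → α → α → Prop
  | refl (a : α) : StepN R 0 a a
  | step {a b c : α} {n : ℕ} : R a b → StepN R n b c → StepN R (n + 1) a c

/-- States of the Searching Abstract Machine: a code and an argument stack. -/
abbrev SState : Type := Term × List Term

/-- Decoding of Searching AM states. -/
def decode : Term → List Term → Term
  | t, [] => t
  | t, u :: π => decode (.app t u) π

/-- The overhead (searching) transition `→@l`. -/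
inductive SApp : SState → SState → Prop
  | mk (t u : Term) (π : List Term) : SApp (.app t u, π) (t, u :: π)

/-- The beta transition `→rβ`. -/
inductive SBeta : SState → SState → Prop
  | mk (x : ℕ) (t u : Term) (π : List Term) :
      SBeta (.lam x t, u :: π) (Term.subst x u t, π)

/-- The transition relation of the Searching AM. -/
inductive SStep : SState → SState → Prop
  | appl {s s' : SState} : SApp s s' → SStep s s'
  | beta {s s' : SState} : SBeta s s' → SStep s s'

/-- final states of the Searching AM decode to weak head normal forms. -/
theorem searching_final_decodes_to_whnf (s : SState) (hfin : ¬ ∃ s', SStep s s') :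
    ¬ ∃ u : Term, Wh (decode s.1 s.2) u := by
  have key : ∀ (π : List Term) (t : Term), (¬ ∃ u, Wh t u) → (∀ x b, t ≠ .lam x b) →
      ¬ ∃ u, Wh (decode t π) u := by
    intro π
    induction π with
    | nil => intro t h _ ; exact h
    | cons a π ih =>
      intro t h hnl
      apply ih
      · rintro ⟨u, hu⟩
        cases hu with
        | beta x b u => exact hnl x b rfl
        | appL _ h' => exact h ⟨_, h'⟩
      · intro x b hb; cases hb
  obtain ⟨t, π⟩ := s
  match t, π with
  | .var n, π =>
    apply key
    · rintro ⟨u, hu⟩; cases hu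
    · intro x b hb; cases hb
  | .lam x b, [] =>
    rintro ⟨u, hu⟩; cases hu
  | .lam x b, a :: π =>
    exact absurd ⟨_, SStep.beta (SBeta.mk x b a π)⟩ hfin
  | .app t u, π =>
    exact absurd ⟨_, SStep.appl (SApp.mk t u π)⟩ hfin
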